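/- arXiv:1806.04370 — 2 statements merged into one kernel-verified Lean document; each statement's English description precedes it below -/
import Mathlib

section
/- Let p be an odd prime and integers 1 ≤ b ≤ a. The group G = ⟨x, y ∣ x^(p^a) = y^(p^a) = z^(p^b) = [x,z] = [y,z] = 1, z = [x,y]⟩ has order p^(2a+b). -/
/-!
Put `n = p^a`, `m = p^b`, so `m ∣ n`. The presented group maps onto an explicit Heisenberg-type
group on `ZMod n × ZMod n × ZMod m` of order `n²m`. Conversely, since `z` is central and
`x y = y x z`, every element of the presented group is a word `y^v x^u z^w`, and multiplying such
words follows the same cocycle rule as in the model, so `⟨u, v, w⟩ ↦ y^v x^u z^w` is an inverse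
homomorphism.
-/

section
variable {G : Type*} [Group G]

theorem pow_val_eq_pow_of_natCast_eq {x : G} {n k : ℕ} {t : ZMod n} (hx : x ^ n = 1)
    (ht : (k : ZMod n) = t) : x ^ t.val = x ^ k := by
  rw [← ht, ZMod.val_natCast, ← pow_eq_pow_mod k hx]

theorem inv_mul_inv_mul_mul_eq_one_iff {a b : G} : a⁻¹ * b⁻¹ * a * b = 1 ↔ Commute a b := by
  rw [← mul_inv_rev, mul_assoc, inv_mul_eq_one, eq_comm, commute_iff_eq]

variable {x y z : G}

theorem pow_mul_pow_eq_of_mul_eq_mul_mul (hzx : Commute z x) (hzy : Commute z y)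
    (hxy : x * y = y * x * z) (i j : ℕ) : x ^ i * y ^ j = y ^ j * x ^ i * z ^ (i * j) := by
  have conj_y : ∀ i : ℕ, x ^ i * y * (x ^ i)⁻¹ = y * z ^ i := by
    intro i
    induction i with
    | zero => simp
    | succ i ih =>
      calc x ^ (i + 1) * y * (x ^ (i + 1))⁻¹ = x * (x ^ i * y * (x ^ i)⁻¹) * x⁻¹ := by group
        _ = x * y * (z ^ i * x⁻¹) := by rw [ih]; group
        _ = y * (x * z) * x⁻¹ * z ^ i := by rw [(hzx.pow_left i).inv_right.eq, hxy]; group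
        _ = y * z ^ (i + 1) := by rw [← hzx.eq, pow_succ']; group
  calc x ^ i * y ^ j = (x ^ i * y * (x ^ i)⁻¹) ^ j * x ^ i := by rw [conj_pow]; group
    _ = y ^ j * (z ^ (i * j) * x ^ i) := by
      rw [conj_y, (hzy.pow_left i).symm.mul_pow j, ← pow_mul, mul_assoc]
    _ = y ^ j * x ^ i * z ^ (i * j) := by rw [(hzx.pow_pow _ _).eq, mul_assoc]

theorem normal_form_mul (hzx : Commute z x) (hzy : Commute z y)
    (hxy : x * y = y * x * z) (a b c a' b' c' : ℕ) :
    y ^ b * x ^ a * z ^ c * (y ^ b' * x ^ a' * z ^ c') =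
      y ^ (b + b') * x ^ (a + a') * z ^ (c + c' + a * b') := by
  calc y ^ b * x ^ a * z ^ c * (y ^ b' * x ^ a' * z ^ c')
      = y ^ b * x ^ a * (z ^ c * (y ^ b' * x ^ a')) * z ^ c' := by group
    _ = y ^ b * (x ^ a * y ^ b') * (x ^ a' * z ^ c) * z ^ c' := by
        rw [((hzy.pow_pow c b').mul_right (hzx.pow_pow c a')).eq]; group
    _ = y ^ (b + b') * x ^ a * (z ^ (a * b') * x ^ a') * z ^ c * z ^ c' := by
        rw [pow_mul_pow_eq_of_mul_eq_mul_mul hzx hzy hxy, pow_add]; group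
    _ = y ^ (b + b') * x ^ (a + a') * z ^ (c + c' + a * b') := by
        rw [(hzx.pow_pow _ a').eq, pow_add, pow_add, pow_add]; group
end

/-- `⟨u, v, w⟩` stands for `y^v x^u z^w`; the product is
`⟨u, v, w⟩ * ⟨u', v', w'⟩ = ⟨u + u', v + v', w + w' + u v'⟩`, where `u v'` is reduced mod `m`,
which is well defined because `m ∣ n`. -/
@[ext] structure HeisenbergMod (n m : ℕ) where
  u : ZMod n
  v : ZMod n
  w : ZMod m

namespace HeisenbergMod

variable {n m : ℕ}

instance : One (HeisenbergMod n m) := ⟨⟨0, 0, 0⟩⟩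

theorem one_def : (1 : HeisenbergMod n m) = ⟨0, 0, 0⟩ := rfl

theorem card : Nat.card (HeisenbergMod n m) = n * n * m := by
  let e : HeisenbergMod n m ≃ ZMod n × ZMod n × ZMod m :=
    ⟨fun g => (g.u, g.v, g.w), fun t => ⟨t.1, t.2.1, t.2.2⟩, fun _ => rfl, fun _ => rfl⟩
  rw [Nat.card_congr e, Nat.card_prod, Nat.card_prod, Nat.card_zmod, Nat.card_zmod, mul_assoc]

variable [Fact (m ∣ n)]

instance : Mul (HeisenbergMod n m) :=
  ⟨fun g h => ⟨g.u + h.u, g.v + h.v,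
    g.w + h.w + ZMod.castHom Fact.out (ZMod m) g.u * ZMod.castHom Fact.out (ZMod m) h.v⟩⟩

instance : Inv (HeisenbergMod n m) :=
  ⟨fun g => ⟨-g.u, -g.v,
    -g.w + ZMod.castHom Fact.out (ZMod m) g.u * ZMod.castHom Fact.out (ZMod m) g.v⟩⟩

theorem mul_def (g h : HeisenbergMod n m) : g * h = ⟨g.u + h.u, g.v + h.v,
    g.w + h.w + ZMod.castHom Fact.out (ZMod m) g.u * ZMod.castHom Fact.out (ZMod m) h.v⟩ := rfl

theorem inv_def (g : HeisenbergMod n m) : g⁻¹ = ⟨-g.u, -g.v,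
    -g.w + ZMod.castHom Fact.out (ZMod m) g.u * ZMod.castHom Fact.out (ZMod m) g.v⟩ := rfl

instance : Group (HeisenbergMod n m) :=
  Group.ofLeftAxioms
    (fun g h k => by ext <;> simp only [mul_def, map_add] <;> ring)
    (fun g => by ext <;> simp [mul_def, one_def])
    (fun g => by ext <;> simp only [mul_def, inv_def, one_def, map_neg] <;> ring)

def X : HeisenbergMod n m := ⟨1, 0, 0⟩
def Y : HeisenbergMod n m := ⟨0, 1, 0⟩
def C : HeisenbergMod n m := ⟨0, 0, 1⟩

theorem X_pow (k : ℕ) : (X ^ k : HeisenbergMod n m) = ⟨k, 0, 0⟩ := by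
  induction k with
  | zero => simp [one_def]
  | succ k ih => rw [pow_succ, ih]; ext <;> simp [mul_def, X]

theorem Y_pow (k : ℕ) : (Y ^ k : HeisenbergMod n m) = ⟨0, k, 0⟩ := by
  induction k with
  | zero => simp [one_def]
  | succ k ih => rw [pow_succ, ih]; ext <;> simp [mul_def, Y]

theorem C_pow (k : ℕ) : (C ^ k : HeisenbergMod n m) = ⟨0, 0, k⟩ := by
  induction k with
  | zero => simp [one_def]
  | succ k ih => rw [pow_succ, ih]; ext <;> simp [mul_def, C]

theorem X_pow_n : (X ^ n : HeisenbergMod n m) = 1 := by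
  rw [X_pow, ZMod.natCast_self, one_def]

theorem Y_pow_n : (Y ^ n : HeisenbergMod n m) = 1 := by
  rw [Y_pow, ZMod.natCast_self, one_def]

theorem C_pow_m : (C ^ m : HeisenbergMod n m) = 1 := by
  rw [C_pow, ZMod.natCast_self, one_def]

theorem commute_C (g : HeisenbergMod n m) : Commute C g := by
  ext <;> simp [mul_def, C, add_comm]

theorem inv_X_mul_inv_Y_mul_X_mul_Y : (X⁻¹ * Y⁻¹ * X * Y : HeisenbergMod n m) = C := by
  ext <;> simp [mul_def, inv_def, X, Y, C, -ZMod.castHom_apply]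

theorem Y_pow_mul_X_pow_mul_C_pow [NeZero n] [NeZero m] (g : HeisenbergMod n m) :
    Y ^ g.v.val * X ^ g.u.val * C ^ g.w.val = g := by
  ext <;> simp [X_pow, Y_pow, C_pow, mul_def]

theorem hom_ext [NeZero n] [NeZero m] {G : Type*} [Group G] {f f' : HeisenbergMod n m →* G}
    (hX : f X = f' X) (hY : f Y = f' Y) : f = f' := by
  have hC : f C = f' C := by
    simp only [← inv_X_mul_inv_Y_mul_X_mul_Y, map_mul, map_inv, hX, hY]
  ext g
  rw [← Y_pow_mul_X_pow_mul_C_pow g]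
  simp only [map_mul, map_pow, hX, hY, hC]

section lift

variable [NeZero n] [NeZero m] {G : Type*} [Group G] {x y z : G}

def lift (hx : x ^ n = 1) (hy : y ^ n = 1) (hz : z ^ m = 1) (hzx : Commute z x)
    (hzy : Commute z y) (hxy : x * y = y * x * z) : HeisenbergMod n m →* G where
  toFun g := y ^ g.v.val * x ^ g.u.val * z ^ g.w.val
  map_one' := by simp [one_def]
  map_mul' g h := by
    rw [normal_form_mul hzx hzy hxy, mul_def]
    dsimp only
    rw [pow_val_eq_pow_of_natCast_eq (k := g.v.val + h.v.val) hy (by push_cast; simp),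
      pow_val_eq_pow_of_natCast_eq (k := g.u.val + h.u.val) hx (by push_cast; simp),
      pow_val_eq_pow_of_natCast_eq (k := g.w.val + h.w.val + g.u.val * h.v.val) hz
        (by push_cast; simp [ZMod.natCast_val])]

variable (hx : x ^ n = 1) (hy : y ^ n = 1) (hz : z ^ m = 1) (hzx : Commute z x)
    (hzy : Commute z y) (hxy : x * y = y * x * z)

theorem lift_X : lift hx hy hz hzx hzy hxy X = x := by
  simp [lift, X, pow_val_eq_pow_of_natCast_eq hx Nat.cast_one]

theorem lift_Y : lift hx hy hz hzx hzy hxy Y = y := by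
  simp [lift, Y, pow_val_eq_pow_of_natCast_eq hy Nat.cast_one]

end lift

end HeisenbergMod

def heisenbergRels (n m : ℕ) : Set (FreeGroup (Fin 2)) :=
  let x := FreeGroup.of 0
  let y := FreeGroup.of 1
  let z := x⁻¹ * y⁻¹ * x * y
  {x ^ n, y ^ n, z ^ m, x⁻¹ * z⁻¹ * x * z, y⁻¹ * z⁻¹ * y * z}

namespace HeisenbergMod

variable (n m : ℕ) [Fact (m ∣ n)] [NeZero n] [NeZero m]

def toPresentedGroup : HeisenbergMod n m →* PresentedGroup (heisenbergRels n m) :=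
  let x : PresentedGroup (heisenbergRels n m) := .of 0
  let y : PresentedGroup (heisenbergRels n m) := .of 1
  let z := x⁻¹ * y⁻¹ * x * y
  have rel {r} (hr : r ∈ heisenbergRels n m) := PresentedGroup.one_of_mem hr
  have hx : x ^ n = 1 := rel (by simp [heisenbergRels])
  have hy : y ^ n = 1 := rel (by simp [heisenbergRels])
  have hz : z ^ m = 1 := rel (by simp [heisenbergRels])
  have hzx : Commute z x :=
    (inv_mul_inv_mul_mul_eq_one_iff.1 (rel (by simp [heisenbergRels]))).symm
  have hzy : Commute z y :=
    (inv_mul_inv_mul_mul_eq_one_iff.1 (rel (by simp [heisenbergRels]))).symm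
  lift hx hy hz hzx hzy (by simp only [z]; group)

theorem toPresentedGroup_X : toPresentedGroup n m X = .of 0 := by
  simp only [toPresentedGroup]; exact lift_X ..

theorem toPresentedGroup_Y : toPresentedGroup n m Y = .of 1 := by
  simp only [toPresentedGroup]; exact lift_Y ..

def ofPresentedGroup : PresentedGroup (heisenbergRels n m) →* HeisenbergMod n m :=
  PresentedGroup.toGroup (f := ![X, Y]) (by
    simp only [heisenbergRels, Set.mem_insert_iff, Set.mem_singleton_iff, forall_eq_or_imp,
      forall_eq, map_pow, map_mul, map_inv, FreeGroup.lift_apply_of, Matrix.cons_val_zero,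
      Matrix.cons_val_one, inv_X_mul_inv_Y_mul_X_mul_Y, inv_mul_inv_mul_mul_eq_one_iff]
    exact ⟨X_pow_n, Y_pow_n, C_pow_m, (commute_C X).symm, (commute_C Y).symm⟩)

def presentedGroupEquiv : PresentedGroup (heisenbergRels n m) ≃* HeisenbergMod n m :=
  MonoidHom.toMulEquiv (ofPresentedGroup n m) (toPresentedGroup n m)
    (PresentedGroup.ext fun i => by
      fin_cases i <;> simp [ofPresentedGroup, toPresentedGroup_X, toPresentedGroup_Y])
    (hom_ext (by simp [ofPresentedGroup, toPresentedGroup_X])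
      (by simp [ofPresentedGroup, toPresentedGroup_Y]))

theorem card_presentedGroup : Nat.card (PresentedGroup (heisenbergRels n m)) = n * n * m := by
  rw [Nat.card_congr (presentedGroupEquiv n m).toEquiv, card]

end HeisenbergMod

theorem stmt_16_general (p a b : ℕ) (hp : p.Prime)
    (hba : b ≤ a) :
    ∀ X Y Z : FreeGroup (Fin 2), X = FreeGroup.of 0 → Y = FreeGroup.of 1 →
      Z = X⁻¹ * Y⁻¹ * X * Y →
      Nat.card (PresentedGroup
        ({X ^ p ^ a, Y ^ p ^ a, Z ^ p ^ b,
          X⁻¹ * Z⁻¹ * X * Z, Y⁻¹ * Z⁻¹ * Y * Z} : Set (FreeGroup (Fin 2)))) =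
        p ^ (2 * a + b) := by
  rintro X Y Z rfl rfl rfl
  have : Fact (p ^ b ∣ p ^ a) := ⟨pow_dvd_pow p hba⟩
  have : NeZero (p ^ a) := ⟨pow_ne_zero a hp.ne_zero⟩
  have : NeZero (p ^ b) := ⟨pow_ne_zero b hp.ne_zero⟩
  calc _ = p ^ a * p ^ a * p ^ b := HeisenbergMod.card_presentedGroup (p ^ a) (p ^ b)
    _ = p ^ (2 * a + b) := by ring

/-- For an odd prime `p` and `1 ≤ b ≤ a`, the group
`⟨x, y ∣ x^(p^a) = y^(p^a) = z^(p^b) = [x,z] = [y,z] = 1, z := [x,y]⟩`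
has order `p^(2a+b)`. -/
theorem stmt_16 (p a b : ℕ) (hp : p.Prime) (hodd : Odd p)
    (hb : 1 ≤ b) (hba : b ≤ a) :
    ∀ X Y Z : FreeGroup (Fin 2), X = FreeGroup.of 0 → Y = FreeGroup.of 1 →
      Z = X⁻¹ * Y⁻¹ * X * Y →
      Nat.card (PresentedGroup
        ({X ^ p ^ a, Y ^ p ^ a, Z ^ p ^ b,
          X⁻¹ * Z⁻¹ * X * Z, Y⁻¹ * Z⁻¹ * Y * Z} : Set (FreeGroup (Fin 2)))) =
        p ^ (2 * a + b) :=
  stmt_16_general p a b hp hba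
end

section
/- Let G be a finite group generated by x and y such that Aut(G) acts transitively on ordered generating pairs and o(x) = o(y) = n. Suppose ⟨x⟩ ∩ ⟨y⟩ has order m, so that with q = n/m there is r coprime to m with y^q = x^(qr). Then m ≤ 2. -/
/-!
The automorphism `σ` sending the generating pair `(x, y)` to `(x, y⁻¹)` fixes `x` and inverts
`y`, so applying it to `y^q = x^(qr)` gives `y^(-q) = x^(qr)`; multiplying the two relations
yields `x^(2qr) = 1`. Hence `n = qm` divides `2qr`, so `m ∣ 2r`, and `m ∣ 2` since `r` is coprime
to `m`.
-/

namespace Subgroup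

variable {G : Type*} [Group G]

theorem closure_pair_inv_right (x y : G) :
    closure ({x, y⁻¹} : Set G) = closure {x, y} := by
  rw [Set.insert_eq, Set.insert_eq, closure_union, closure_union, closure_singleton_inv]

theorem card_zpowers_inf_dvd_orderOf (x : G) (H : Subgroup G) :
    Nat.card ↥(zpowers x ⊓ H) ∣ orderOf x :=
  Nat.card_zpowers x ▸ card_dvd_of_le inf_le_left

end Subgroup

theorem MulAut.pow_two_mul_eq_one_of_map_eq_inv {G : Type*} [Group G] {σ : MulAut G} {x y : G}
    (hσx : σ x = x) (hσy : σ y = y⁻¹) {q k : ℕ} (hyq : y ^ q = x ^ k) : x ^ (2 * k) = 1 := by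
  have hinv : y⁻¹ ^ q = x ^ k := by
    rw [← hσy, ← hσx, ← map_pow, ← map_pow, hyq]
  rw [two_mul, pow_add]
  nth_rw 1 [← hyq]
  rw [← hinv, inv_pow, mul_inv_cancel]

theorem Nat.dvd_of_mul_dvd_mul_mul_of_coprime {q m r k : ℕ} (hq : 0 < q) (hr : r.Coprime m)
    (h : q * m ∣ k * (q * r)) : m ∣ k := by
  rw [mul_left_comm] at h
  exact hr.symm.dvd_of_dvd_mul_right (Nat.dvd_of_mul_dvd_mul_left hq h)

theorem stmt_18_general (G : Type*) [Group G] [Finite G] (x y : G)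
    (htrans : ∀ x₁ y₁ x₂ y₂ : G,
      Subgroup.closure ({x₁, y₁} : Set G) = ⊤ →
      Subgroup.closure ({x₂, y₂} : Set G) = ⊤ →
      ∃ σ : MulAut G, σ x₁ = x₂ ∧ σ y₁ = y₂)
    (hgen : Subgroup.closure ({x, y} : Set G) = ⊤)
    (n m q r : ℕ) (hx : orderOf x = n)
    (hm : Nat.card (↥(Subgroup.zpowers x ⊓ Subgroup.zpowers y)) = m)
    (hq : q = n / m) (hr : Nat.Coprime r m) (hyq : y ^ q = x ^ (q * r)) :
    m ≤ 2 := by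
  obtain ⟨σ, hσx, hσy⟩ :=
    htrans x y x y⁻¹ hgen ((Subgroup.closure_pair_inv_right x y).trans hgen)
  have hn_dvd : n ∣ 2 * (q * r) :=
    hx ▸ orderOf_dvd_of_pow_eq_one (MulAut.pow_two_mul_eq_one_of_map_eq_inv hσx hσy hyq)
  have hm_dvd : m ∣ n := hm ▸ hx ▸ Subgroup.card_zpowers_inf_dvd_orderOf x _
  have hn_pos : 0 < n := hx ▸ orderOf_pos x
  have hqm : q * m = n := hq ▸ Nat.div_mul_cancel hm_dvd
  have hq_pos : 0 < q := Nat.pos_of_mul_pos_right (hqm ▸ hn_pos : 0 < q * m)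
  exact Nat.le_of_dvd two_pos
    (Nat.dvd_of_mul_dvd_mul_mul_of_coprime hq_pos hr (hqm ▸ hn_dvd))

/-- If `Aut(G)` is transitive on generating pairs of `G = ⟨x,y⟩`, with
`o(x) = o(y) = n`, `|⟨x⟩ ∩ ⟨y⟩| = m`, `q = n/m` and `y^q = x^(qr)` with
`gcd(r,m) = 1`, then `m ≤ 2`. -/
theorem stmt_18 (G : Type*) [Group G] [Finite G] (x y : G)
    (htrans : ∀ x₁ y₁ x₂ y₂ : G,
      Subgroup.closure ({x₁, y₁} : Set G) = ⊤ →
      Subgroup.closure ({x₂, y₂} : Set G) = ⊤ →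
      ∃ σ : MulAut G, σ x₁ = x₂ ∧ σ y₁ = y₂)
    (hgen : Subgroup.closure ({x, y} : Set G) = ⊤)
    (n m q r : ℕ) (hx : orderOf x = n) (hy : orderOf y = n)
    (hm : Nat.card (↥(Subgroup.zpowers x ⊓ Subgroup.zpowers y)) = m)
    (hq : q = n / m) (hr : Nat.Coprime r m) (hyq : y ^ q = x ^ (q * r)) :
    m ≤ 2 :=
  stmt_18_general G x y htrans hgen n m q r hx hm hq hr hyq
end
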